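/- For even N, the discrete Hilbert transform defined by the circular convolution (H_Δ u)_n = ∑_{j=0}^{N−1} c_{n−j} u_j with c_n = (2/N)·cot(πn/N) for odd n and c_n = 0 for even n, satisfies H_Δ u = F^{−1}(−i·S_even·(F u)), where S_even is multiplication by the diagonal sequence (0, 1,…,1, 0, −1,…,−1) with (N/2 − 1) ones, a zero at index N/2, and (N/2 − 1) negative ones. -/

import Mathlib

open Finset

/-- Thomée–Vasudeva Murthy's kernel for even `N`. -/
noncomputable def tvmKernel (N : ℕ) (n : ZMod N) : ℝ :=
  if Odd n.val then (2 / (N : ℝ)) * Real.cot (Real.pi * (n.val : ℝ) / (N : ℝ)) else 0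

/-- The discrete sign symbol for even `N`: `(0, 1, …, 1, 0, -1, …, -1)` with `N/2 - 1`
ones, a zero at index `N/2`, and `N/2 - 1` negative ones. -/
def sgnEven (N : ℕ) (k : ZMod N) : ℝ :=
  if k.val = 0 then 0 else if k.val < N / 2 then 1 else if k.val = N / 2 then 0 else -1

/-- The discrete Fourier transform of `u : ZMod N → ℂ`. -/
noncomputable def dft (N : ℕ) [NeZero N] (u : ZMod N → ℂ) (k : ZMod N) : ℂ :=
  ∑ n : ZMod N, u n * Complex.exp (-2 * Real.pi * Complex.I * (n.val : ℂ) * (k.val : ℂ) / (N : ℂ))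

/-- The inverse discrete Fourier transform of `v : ZMod N → ℂ`. -/
noncomputable def idft (N : ℕ) [NeZero N] (v : ZMod N → ℂ) (n : ZMod N) : ℂ :=
  (1 / (N : ℂ)) *
    ∑ k : ZMod N, v k * Complex.exp (2 * Real.pi * Complex.I * (n.val : ℂ) * (k.val : ℂ) / (N : ℂ))

/-
The kernel is the inverse transform of the multiplier: by the convolution theorem it suffices
to show `F⁻¹(-i·S_even) = c`. With `ω = exp (2πi d / N)` and `N = 2M`, oddness of the sign symbol
gives `F⁻¹(-i·S_even)_d = (-i/N) ∑_{k=1}^{M-1} (ω^k - ω^{-k})`, and summing the two geometric series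
gives `(1 - ω) ∑_{k=1}^{M-1} (ω^k - ω^{-k}) = (1 - ω^M)(1 + ω)` with `ω^M = (-1)^d`. For even `d`
the sum vanishes; for odd `d` it is `2(1 + ω)/(1 - ω)`, and `cot (πd/N) = i(1 + ω)/(ω - 1)`.
-/

open Complex
open scoped Real

section GeometricSums

variable {K : Type*} [Field K]

lemma sum_range_sign_mul_pow {ω : K} {M : ℕ} (hM : 0 < M) (hω : ω ^ (2 * M) = 1) :
    ∑ k ∈ range (2 * M),
        (if k = 0 then 0 else if k < M then 1 else if k = M then 0 else -1 : K) * ω ^ k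
      = ∑ k ∈ Ico 1 M, ω ^ k - ∑ k ∈ Ico 1 M, ω⁻¹ ^ k := by
  have hω0 : ω ≠ 0 := by rintro rfl; simp [hM.ne'] at hω
  have hreflect : ∑ k ∈ Ico 1 M, ω⁻¹ ^ k = ∑ k ∈ Ico (M + 1) (2 * M), ω ^ k := by
    have := sum_Ico_reflect (fun k => ω ^ k) 1 (by omega : M ≤ 2 * M + 1)
    rw [show 2 * M + 1 - M = M + 1 by omega, show 2 * M + 1 - 1 = 2 * M by omega] at this
    rw [← this]
    refine sum_congr rfl fun k hk => ?_
    rw [pow_sub₀ ω hω0 (by simp at hk; omega), hω, one_mul, inv_pow]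
  have hterm : ∀ k ∈ range (2 * M),
      (if k = 0 then 0 else if k < M then 1 else if k = M then 0 else -1 : K) * ω ^ k
        = (if k ∈ Ico 1 M then ω ^ k else 0) - (if k ∈ Ico (M + 1) (2 * M) then ω ^ k else 0) := by
    intro k hk
    simp only [mem_Ico, mem_range] at hk ⊢
    split_ifs <;> first | omega | ring
  rw [sum_congr rfl hterm, sum_sub_distrib, sum_ite_mem, sum_ite_mem, hreflect,
    inter_eq_right.2, inter_eq_right.2]
  · intro k; simp only [mem_Ico, mem_range]; omega
  · intro k; simp only [mem_Ico, mem_range]; omega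

lemma one_sub_mul_sum_pow_sub_sum_inv_pow {ω : K} {M : ℕ} (hω : ω ^ (2 * M) = 1) :
    (1 - ω) * (∑ k ∈ Ico 1 M, ω ^ k - ∑ k ∈ Ico 1 M, ω⁻¹ ^ k) = (1 - ω ^ M) * (1 + ω) := by
  rcases Nat.eq_zero_or_pos M with rfl | hM
  · simp
  have hω0 : ω ≠ 0 := by rintro rfl; simp [hM.ne'] at hω
  have hA := geom_sum_Ico_mul_neg ω (show 1 ≤ M from hM)
  have hB := geom_sum_Ico_mul_neg ω⁻¹ (show 1 ≤ M from hM)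
  have hMM : ω ^ M * ω ^ M = 1 := by rw [← pow_add, ← two_mul, hω]
  rw [inv_pow ω M, inv_eq_of_mul_eq_one_right hMM] at hB
  -- `ω * (1 - ω⁻¹) = -(1 - ω)` turns the second geometric sum into one with factor `1 - ω`
  linear_combination hA + ω * hB + (1 + ∑ k ∈ Ico 1 M, ω⁻¹ ^ k) * mul_inv_cancel₀ hω0

end GeometricSums

section DiscreteFourier

variable {N : ℕ} [NeZero N]

lemma exp_two_pi_I_val_mul_val_div (n k : ZMod N) :
    exp (2 * π * I * n.val * k.val / N) = ZMod.stdAddChar (n * k) := by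
  have hcast : n * k = ((n.val * k.val : ℕ) : ZMod N) := by simp
  rw [hcast, ZMod.stdAddChar_apply, ZMod.toCircle_natCast]
  push_cast
  ring_nf

lemma exp_neg_two_pi_I_val_mul_val_div (n k : ZMod N) :
    exp (-2 * π * I * n.val * k.val / N) = ZMod.stdAddChar (-(n * k)) := by
  rw [AddChar.map_neg_eq_inv, ← exp_two_pi_I_val_mul_val_div, ← exp_neg]
  ring_nf

lemma dft_eq_sum_stdAddChar (u : ZMod N → ℂ) (k : ZMod N) :
    dft N u k = ∑ n, u n * ZMod.stdAddChar (-(n * k)) := by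
  simp only [dft, exp_neg_two_pi_I_val_mul_val_div]

lemma idft_eq_sum_stdAddChar (v : ZMod N → ℂ) (n : ZMod N) :
    idft N v n = (N : ℂ)⁻¹ * ∑ k, v k * ZMod.stdAddChar (n * k) := by
  simp only [idft, one_div, exp_two_pi_I_val_mul_val_div]

lemma idft_mul_dft_apply (σ u : ZMod N → ℂ) (n : ZMod N) :
    idft N (fun k => σ k * dft N u k) n = ∑ j, idft N σ (n - j) * u j := by
  simp only [idft_eq_sum_stdAddChar, dft_eq_sum_stdAddChar, mul_sum, sum_mul]
  rw [sum_comm]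
  refine sum_congr rfl fun j _ => sum_congr rfl fun k _ => ?_
  rw [sub_mul, sub_eq_add_neg, AddChar.map_add_eq_mul]
  ring

lemma sum_zmod_val_eq_sum_range {A : Type*} [AddCommMonoid A] (f : ℕ → A) :
    ∑ k : ZMod N, f k.val = ∑ k ∈ range N, f k :=
  sum_nbij' ZMod.val (fun k => (k : ZMod N))
    (fun a _ => mem_range.2 (ZMod.val_lt a)) (fun _ _ => mem_univ _)
    (fun a _ => ZMod.natCast_zmod_val a) (fun _ ha => ZMod.val_cast_of_lt (mem_range.1 ha))
    (fun _ _ => rfl)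

lemma stdAddChar_pow_eq_one (d : ZMod N) : ZMod.stdAddChar d ^ N = 1 := by
  rw [← AddChar.map_nsmul_eq_pow, nsmul_eq_mul, ZMod.natCast_self, zero_mul,
    AddChar.map_zero_eq_one]

lemma stdAddChar_pow_eq_neg_one_pow_val {M : ℕ} (hM : N = 2 * M) (d : ZMod N) :
    ZMod.stdAddChar d ^ M = (-1) ^ d.val := by
  have hM0 : (M : ℂ) ≠ 0 := by
    have := NeZero.ne N
    exact_mod_cast (by omega : M ≠ 0)
  have harg : (M : ℂ) * (2 * π * I * d.val / N) = d.val * (π * I) := by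
    have hN : (N : ℂ) = 2 * M := by exact_mod_cast hM
    rw [hN]; field_simp
  rw [ZMod.stdAddChar_apply, ZMod.toCircle_apply, ← exp_nat_mul, harg, exp_nat_mul, exp_pi_mul_I]

lemma ofReal_cot_pi_val_div (d : ZMod N) :
    (Real.cot (Real.pi * (d.val : ℝ) / (N : ℝ)) : ℂ)
      = (1 + ZMod.stdAddChar d) / (I * (1 - ZMod.stdAddChar d)) := by
  rw [ofReal_cot, cot_eq_exp_ratio, ZMod.stdAddChar_apply, ZMod.toCircle_apply, add_comm]
  push_cast
  ring_nf

lemma stdAddChar_ne_one {d : ZMod N} (hd : d ≠ 0) : ZMod.stdAddChar d ≠ 1 := by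
  rw [← AddChar.map_zero_eq_one (ZMod.stdAddChar (N := N))]
  exact ZMod.injective_stdAddChar.ne hd

lemma sum_sgnEven_mul_stdAddChar {M : ℕ} (hM : N = 2 * M) (d : ZMod N) :
    ∑ k, (sgnEven N k : ℂ) * ZMod.stdAddChar (d * k)
      = ∑ k ∈ Ico 1 M, ZMod.stdAddChar d ^ k - ∑ k ∈ Ico 1 M, (ZMod.stdAddChar d)⁻¹ ^ k := by
  have hterm : ∀ k : ZMod N, (sgnEven N k : ℂ) * ZMod.stdAddChar (d * k)
      = (if k.val = 0 then 0 else if k.val < M then 1 else if k.val = M then 0 else -1 : ℂ)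
        * ZMod.stdAddChar d ^ k.val := by
    intro k
    rw [← AddChar.map_nsmul_eq_pow, nsmul_eq_mul, ZMod.natCast_zmod_val, mul_comm d]
    simp only [sgnEven, hM, Nat.mul_div_cancel_left M two_pos]
    split_ifs <;> simp
  rw [sum_congr rfl fun k _ => hterm k, sum_zmod_val_eq_sum_range
    (fun k => (if k = 0 then 0 else if k < M then 1 else if k = M then 0 else -1 : ℂ)
      * ZMod.stdAddChar d ^ k), show range N = range (2 * M) by rw [hM]]
  refine sum_range_sign_mul_pow ?_ (by rw [← hM]; exact stdAddChar_pow_eq_one d)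
  have := NeZero.ne N
  omega

lemma idft_neg_I_mul_sgnEven_eq_tvmKernel (hN : Even N) (d : ZMod N) :
    idft N (fun k => -I * sgnEven N k) d = tvmKernel N d := by
  obtain ⟨M, hM⟩ := hN
  replace hM : N = 2 * M := by omega
  set ω := ZMod.stdAddChar d with hω
  have hidft : idft N (fun k => -I * sgnEven N k) d
      = -I / N * (∑ k ∈ Ico 1 M, ω ^ k - ∑ k ∈ Ico 1 M, ω⁻¹ ^ k) := by
    rw [idft_eq_sum_stdAddChar, ← sum_sgnEven_mul_stdAddChar hM d, mul_sum, mul_sum]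
    refine sum_congr rfl fun k _ => ?_
    ring
  have hgeom := one_sub_mul_sum_pow_sub_sum_inv_pow (ω := ω)
    (by rw [← hM]; exact stdAddChar_pow_eq_one d)
  rw [stdAddChar_pow_eq_neg_one_pow_val hM] at hgeom
  rw [hidft, tvmKernel]
  by_cases hd : d = 0
  · simp [hω, hd]
  have hω1 : 1 - ω ≠ 0 := sub_ne_zero.2 (stdAddChar_ne_one hd).symm
  rcases Nat.even_or_odd d.val with he | ho
  · rw [if_neg (Nat.not_odd_iff_even.2 he), ofReal_zero]
    rw [he.neg_one_pow, sub_self, zero_mul, mul_eq_zero] at hgeom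
    rw [hgeom.resolve_left hω1, mul_zero]
  · rw [ho.neg_one_pow] at hgeom
    have hS : ∑ k ∈ Ico 1 M, ω ^ k - ∑ k ∈ Ico 1 M, ω⁻¹ ^ k = 2 * (1 + ω) / (1 - ω) := by
      rw [eq_div_iff hω1]; linear_combination hgeom
    rw [if_pos ho, ofReal_mul, ofReal_cot_pi_val_div d, ← hω, hS]
    push_cast
    field_simp
    rw [I_sq]
    ring

end DiscreteFourier

theorem tvm_discreteHilbert_eq_idft_sgn_dft (N : ℕ) [NeZero N] (hN : Even N) (u : ZMod N → ℂ) :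
    (fun n => ∑ j : ZMod N, ((tvmKernel N (n - j) : ℝ) : ℂ) * u j)
      = idft N (fun k => -Complex.I * (sgnEven N k : ℂ) * dft N u k) := by
  funext n
  rw [idft_mul_dft_apply (fun k => -I * sgnEven N k) u n]
  simp only [idft_neg_I_mul_sgnEven_eq_tvmKernel hN]
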